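/- Let p ≥ 5 be a prime and H a finite p-group of order p^6 and maximal class (nilpotency class 5). Then H has two small derived quotients if and only if H is not metabelian (i.e., H'' ≠ 1). -/

import Mathlib

/-!
If `H'' = 1` then `H^(d+1) = 1` for every `d ≥ 1`, so only `d = 0` can give a small quotient.
Conversely, the five factors of the lower central series of `H` are nontrivial `p`-groups with
product `p^6`, and the first has order at least `p^2`, since `H/H'` cyclic would force `γ₂ = γ₃`.
Hence `|H'| = p^4` and `|γ₄| = p^2`. Now `H'' = [γ₂, γ₂] ≤ γ₄` and `[γ₄, γ₂] ≤ γ₆ = 1`, so `H'`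
has class at most two. In such a group `K` with `|K/K'| = p^2`, choose `x, y` generating `K`
modulo `K'` with `x^p ∈ K'`; bilinearity of the commutator gives `K' = ⟨[x, y]⟩` and
`[x, y]^p = [x^p, y] = 1`. So `|H''| = p`, and `H/H'`, `H'/H''` have orders `p^2 = p^(2^0+1)`
and `p^3 = p^(2^1+1)`.
-/

/-- A derived quotient `H^(d)/H^(d+1)` is small if `H^(d+1) ≠ 1` and it has order `p^(2^d+1)`. -/
def IsSmallDerivedQuotient (p : ℕ) (H : Type*) [Group H] (d : ℕ) : Prop :=
  derivedSeries H (d + 1) ≠ ⊥ ∧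
    (derivedSeries H (d + 1)).relIndex (derivedSeries H d) = p ^ (2 ^ d + 1)

open Subgroup
open scoped commutatorElement

section LowerCentralSeries

variable {G : Type*} [Group G]

theorem commutator_commutator_le_of_rotate {A B C N : Subgroup G} [N.Normal]
    (h₁ : ⁅⁅B, C⁆, A⁆ ≤ N) (h₂ : ⁅⁅C, A⁆, B⁆ ≤ N) : ⁅⁅A, B⁆, C⁆ ≤ N := by
  have key : ∀ X Y Z : Subgroup G, ⁅⁅X, Y⁆, Z⁆ ≤ N ↔
      ⁅⁅X.map (QuotientGroup.mk' N), Y.map (QuotientGroup.mk' N)⁆,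
        Z.map (QuotientGroup.mk' N)⁆ = ⊥ := fun X Y Z => by
    rw [← map_commutator, ← map_commutator, Subgroup.map_eq_bot_iff, QuotientGroup.ker_mk']
  exact (key A B C).mpr <|
    commutator_commutator_eq_bot_of_rotate ((key B C A).mp h₁) ((key C A B).mp h₂)

theorem commutator_lowerCentralSeries_le (m n : ℕ) :
    ⁅(⊤ : Subgroup G).lowerCentralSeries m, (⊤ : Subgroup G).lowerCentralSeries n⁆ ≤
      (⊤ : Subgroup G).lowerCentralSeries (m + n + 1) := by
  induction n generalizing m with
  | zero => exact le_rfl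
  | succ n ih =>
    rw [Subgroup.lowerCentralSeries_succ _ n, commutator_comm]
    refine commutator_commutator_le_of_rotate ?_ (commutator_mono (ih m) le_rfl)
    rw [commutator_comm ⊤, ← Subgroup.lowerCentralSeries_succ]
    exact (ih (m + 1)).trans_eq (by rw [show m + 1 + n = m + (n + 1) by omega])

theorem lowerCentralSeries_eq_of_succ_eq (S : Subgroup G) {n m : ℕ}
    (h : S.lowerCentralSeries (n + 1) = S.lowerCentralSeries n) (hm : n ≤ m) :
    S.lowerCentralSeries m = S.lowerCentralSeries n := by
  induction m, hm using Nat.le_induction with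
  | base => rfl
  | succ m _ ih =>
    rw [Subgroup.lowerCentralSeries_succ, ih, ← Subgroup.lowerCentralSeries_succ, h]

theorem lowerCentralSeries_succ_lt {S : Subgroup G} {n i : ℕ} (hne : S.lowerCentralSeries n ≠ ⊥)
    (hbot : S.lowerCentralSeries (n + 1) = ⊥) (hi : i ≤ n) :
    S.lowerCentralSeries (i + 1) < S.lowerCentralSeries i :=
  (S.lowerCentralSeries_antitone i.le_succ).lt_of_ne fun h => hne <| by
    rw [lowerCentralSeries_eq_of_succ_eq S h hi,
      ← lowerCentralSeries_eq_of_succ_eq S h (hi.trans n.le_succ), hbot]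

theorem commutator_le_of_isCyclic_quotient {M N : Subgroup G} [M.Normal] [N.Normal]
    [IsCyclic (G ⧸ N)] (hMN : M ≤ N) (hN : ⁅N, ⊤⁆ ≤ M) : commutator G ≤ M := by
  refine Normal.quotient_commutative_iff_commutator_le.mp <|
    (QuotientGroup.map M N (MonoidHom.id G) hMN).isMulCommutative_of_isCyclic_of_ker_le_center ?_
  intro q hq
  obtain ⟨g, rfl⟩ := QuotientGroup.mk_surjective q
  have hg : g ∈ N := (QuotientGroup.eq_one_iff g).mp hq
  refine mem_center_iff.mpr fun r => ?_
  obtain ⟨h, rfl⟩ := QuotientGroup.mk_surjective r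
  refine (commutatorElement_eq_one_iff_mul_comm.mp ?_).symm
  rw [← QuotientGroup.mk'_apply, ← QuotientGroup.mk'_apply, ← map_commutatorElement,
    QuotientGroup.mk'_apply, QuotientGroup.eq_one_iff]
  exact hN (commutator_mem_commutator hg (mem_top h))

theorem lowerCentralSeries_two_eq_one_of_isCyclic [IsCyclic (G ⧸ commutator G)] :
    (⊤ : Subgroup G).lowerCentralSeries 2 = (⊤ : Subgroup G).lowerCentralSeries 1 :=
  have h₂₁ := (⊤ : Subgroup G).lowerCentralSeries_antitone (Nat.le_succ 1)
  le_antisymm h₂₁ (commutator_le_of_isCyclic_quotient (N := commutator G) h₂₁ le_rfl)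

end LowerCentralSeries

theorem exists_pow_eq_one_closure_pair_eq_top {P : Type*} [Group P] {p : ℕ} (hp : p.Prime)
    (hP : Nat.card P = p ^ 2) : ∃ a b : P, a ^ p = 1 ∧ closure {a, b} = ⊤ := by
  have : Finite P := Nat.finite_of_card_ne_zero (by simp [hP, hp.ne_zero])
  by_cases hcyc : IsCyclic P
  · obtain ⟨b, hb⟩ := IsCyclic.exists_generator (α := P)
    have hb' : zpowers b ≤ closure {1, b} := zpowers_le.mpr (subset_closure (by simp))
    exact ⟨1, b, one_pow p, eq_top_iff.mpr fun g _ => hb' (hb g)⟩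
  have hexp : ∀ g : P, g ^ p = 1 := fun g => by
    obtain ⟨k, hk, hg⟩ := (Nat.dvd_prime_pow hp).mp (hP ▸ orderOf_dvd_natCard g)
    have hk2 : k ≠ 2 := fun h => hcyc (isCyclic_of_orderOf_eq_card g (by rw [hg, h, hP]))
    rw [← orderOf_dvd_iff_pow_eq_one, hg]
    simpa using pow_dvd_pow p (by omega : k ≤ 1)
  have : Nontrivial P := Finite.one_lt_card_iff_nontrivial.mp (by
    rw [hP]; exact Nat.one_lt_pow two_ne_zero hp.one_lt)
  obtain ⟨a, ha⟩ := exists_ne (1 : P)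
  obtain ⟨b, hb⟩ : ∃ b, b ∉ zpowers a := by
    by_contra! h
    exact hcyc ⟨a, h⟩
  refine ⟨a, b, hexp a, ?_⟩
  have : Fact p.Prime := ⟨hp⟩
  have hindex : (zpowers a).index = p := by
    have h := (zpowers a).card_mul_index
    rw [Nat.card_zpowers, orderOf_eq_prime (hexp a) ha, hP, sq] at h
    exact Nat.eq_of_mul_eq_mul_left hp.pos h
  have hab : zpowers a ≤ closure {a, b} := zpowers_le.mpr (subset_closure (by simp))
  have hne : (zpowers a).relIndex (closure {a, b}) ≠ 1 := fun h =>
    hb (relIndex_eq_one.mp h (subset_closure (by simp)))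
  have hp' : ((zpowers a).relIndex (closure {a, b}) * (closure {a, b}).index).Prime := by
    rwa [relIndex_mul_index hab, hindex]
  exact index_eq_one.mp ((Nat.prime_mul_iff.mp hp').resolve_right fun h => hne h.2).2

section ClassTwo

variable {K : Type*} [Group K]

def commutatorRightHom (hK : commutator K ≤ center K) (g : K) : K →* K where
  toFun h := ⁅g, h⁆
  map_one' := commutatorElement_one_right g
  map_mul' h₁ h₂ := calc
    ⁅g, h₁ * h₂⁆ = ⁅g, h₁⁆ * (h₁ * ⁅g, h₂⁆ * h₁⁻¹) := by simp only [commutatorElement_def]; group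
    _ = ⁅g, h₁⁆ * ⁅g, h₂⁆ := by
      rw [mem_center_iff.mp (hK (commutator_mem_commutator (mem_top g) (mem_top h₂))) h₁,
        mul_inv_cancel_right]

theorem commutator_le_of_closure_sup_eq_top (hK : commutator K ≤ center K) {T : Set K}
    (hT : closure T ⊔ commutator K = ⊤) {Z : Subgroup K} (hZ : ∀ s ∈ T, ∀ t ∈ T, ⁅s, t⁆ ∈ Z) :
    commutator K ≤ Z := by
  have hcentral : ∀ g, ∀ c ∈ commutator K, ⁅g, c⁆ = 1 := fun g c hc =>
    commutatorElement_eq_one_iff_mul_comm.mpr (mem_center_iff.mp (hK hc) g)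
  have key : ∀ g, (∀ t ∈ T, ⁅g, t⁆ ∈ Z) → ∀ h, ⁅g, h⁆ ∈ Z := fun g hg h => by
    have hle : closure T ⊔ commutator K ≤ Z.comap (commutatorRightHom hK g) :=
      sup_le ((closure_le _).mpr hg) fun c hc => by
        simp [commutatorRightHom, hcentral g c hc]
    exact hle (hT ▸ mem_top h)
  rw [_root_.commutator_def, commutator_le]
  rintro g - h -
  refine key g (fun t ht => ?_) h
  rw [← commutatorElement_inv]
  exact inv_mem (key t (hZ t ht) g)

theorem card_commutator_dvd_of_card_quotient_eq_sq (hK : commutator K ≤ center K) {p : ℕ}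
    (hp : p.Prime) (hq : Nat.card (K ⧸ commutator K) = p ^ 2) : Nat.card (commutator K) ∣ p := by
  obtain ⟨a, b, ha, hab⟩ := exists_pow_eq_one_closure_pair_eq_top hp hq
  obtain ⟨x, rfl⟩ := QuotientGroup.mk'_surjective (commutator K) a
  obtain ⟨y, rfl⟩ := QuotientGroup.mk'_surjective (commutator K) b
  have hgen : closure {x, y} ⊔ commutator K = ⊤ := by
    rw [← QuotientGroup.ker_mk' (commutator K), ← comap_map_eq, MonoidHom.map_closure,
      Set.image_pair, hab, comap_top]
  have hle : commutator K ≤ zpowers ⁅x, y⁆ := by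
    refine commutator_le_of_closure_sup_eq_top hK hgen ?_
    rintro _ (rfl | rfl) _ (rfl | rfl)
    · simp only [commutatorElement_self, one_mem]
    · exact mem_zpowers _
    · refine inv_mem_iff.mp ?_
      rw [commutatorElement_inv]
      exact mem_zpowers _
    · simp only [commutatorElement_self, one_mem]
  have hxp : x ^ p ∈ commutator K := by
    rw [← QuotientGroup.eq_one_iff, QuotientGroup.mk_pow]
    exact ha
  have hpow : ⁅x, y⁆ ^ p = 1 := by
    have h : ⁅y, x ^ p⁆ = ⁅y, x⁆ ^ p := map_pow (commutatorRightHom hK y) x p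
    rw [← commutatorElement_inv, inv_pow, ← h, inv_eq_one, commutatorElement_eq_one_iff_mul_comm]
    exact mem_center_iff.mp (hK hxp) y
  calc Nat.card (commutator K) ∣ Nat.card (zpowers ⁅x, y⁆) := card_dvd_of_le hle
    _ = orderOf ⁅x, y⁆ := Nat.card_zpowers _
    _ ∣ p := orderOf_dvd_of_pow_eq_one hpow

end ClassTwo

theorem Subgroup.card_commutator_dvd_of_relIndex_eq_sq {G : Type*} [Group G] {K : Subgroup G}
    (hK : ⁅⁅K, K⁆, K⁆ = ⊥) {p : ℕ} (hp : p.Prime) (hq : ⁅K, K⁆.relIndex K = p ^ 2) :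
    Nat.card (⁅K, K⁆ : Subgroup G) ∣ p := by
  have hKtop : (⊤ : Subgroup K).map K.subtype = K := by
    rw [← MonoidHom.range_eq_map, range_subtype]
  rw [← K.map_subtype_commutator, card_map_of_injective K.subtype_injective]
  refine card_commutator_dvd_of_card_quotient_eq_sq ?_ hp ?_
  · rw [← commutator_top_right_eq_bot_iff_le_center,
      ← map_eq_bot_iff_of_injective _ K.subtype_injective, map_commutator,
      map_subtype_commutator, hKtop, hK]
  · rw [← index_eq_card, ← relIndex_top_right,
      ← relIndex_map_map_of_injective _ _ K.subtype_injective, map_subtype_commutator, hKtop, hq]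

theorem Subgroup.relIndex_eq_pow_of_card_eq_pow {G : Type*} [Group G] {A B : Subgroup G}
    (hAB : A ≤ B) {p a b : ℕ} (hp : 0 < p) (hA : Nat.card A = p ^ a)
    (hB : Nat.card B = p ^ (a + b)) : A.relIndex B = p ^ b := by
  have h := relIndex_mul_relIndex ⊥ A B bot_le hAB
  rw [relIndex_bot_left, relIndex_bot_left, hA, hB, pow_add] at h
  exact Nat.eq_of_mul_eq_mul_left (pow_pos hp a) h

section MaximalClass

variable {G : Type*} [Group G]

theorem card_lowerCentralSeries_of_maximal_class [Finite G] {p : ℕ} (hp : p.Prime)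
    (hcard : Nat.card G = p ^ 6) (h5 : (⊤ : Subgroup G).lowerCentralSeries 5 = ⊥)
    (h4 : (⊤ : Subgroup G).lowerCentralSeries 4 ≠ ⊥) :
    Nat.card ((⊤ : Subgroup G).lowerCentralSeries 1) = p ^ 4 ∧
      Nat.card ((⊤ : Subgroup G).lowerCentralSeries 3) = p ^ 2 := by
  have hlt : ∀ i ≤ 4, Nat.card ((⊤ : Subgroup G).lowerCentralSeries (i + 1)) <
      Nat.card ((⊤ : Subgroup G).lowerCentralSeries i) := fun i hi => by
    have h := lowerCentralSeries_succ_lt h4 h5 hi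
    exact (card_le_of_le h.le).lt_of_ne fun hc => h.ne (eq_of_le_of_card_ge h.le hc.ge)
  choose k hk using fun i => (Nat.dvd_prime_pow hp).mp
    (hcard ▸ card_subgroup_dvd_card ((⊤ : Subgroup G).lowerCentralSeries i))
  have hexp : ∀ i ≤ 4, k (i + 1) < k i := fun i hi => by
    simpa only [(hk _).2, Nat.pow_lt_pow_iff_right hp.one_lt] using hlt i hi
  have hk1 : k 1 ≠ 5 := fun h => by
    have hindex : ((⊤ : Subgroup G).lowerCentralSeries 1).index = p := by
      have hmul := ((⊤ : Subgroup G).lowerCentralSeries 1).card_mul_index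
      rw [(hk 1).2, h, hcard, pow_succ] at hmul
      exact Nat.eq_of_mul_eq_mul_left (pow_pos hp.pos 5) hmul
    have : Fact p.Prime := ⟨hp⟩
    have : IsCyclic (G ⧸ commutator G) := isCyclic_of_prime_card (p := p) <| by
      rw [← index_eq_card]; exact hindex
    exact (hlt 1 (by norm_num)).ne <|
      congrArg (fun S : Subgroup G => Nat.card S) lowerCentralSeries_two_eq_one_of_isCyclic
  have : k 0 ≤ 6 := (hk 0).1
  have : k 1 < k 0 := hexp 0 (by norm_num)
  have : k 2 < k 1 := hexp 1 (by norm_num)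
  have : k 3 < k 2 := hexp 2 (by norm_num)
  have : k 4 < k 3 := hexp 3 (by norm_num)
  have : k 5 < k 4 := hexp 4 le_rfl
  exact ⟨by rw [(hk 1).2, show k 1 = 4 by omega], by rw [(hk 3).2, show k 3 = 2 by omega]⟩

theorem card_derivedSeries_two_of_maximal_class [Finite G] {p : ℕ} (hp : p.Prime)
    (hcard : Nat.card G = p ^ 6) (h5 : (⊤ : Subgroup G).lowerCentralSeries 5 = ⊥)
    (h4 : (⊤ : Subgroup G).lowerCentralSeries 4 ≠ ⊥) (h2 : derivedSeries G 2 ≠ ⊥) :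
    Nat.card (derivedSeries G 2) = p := by
  obtain ⟨hcard₁, hcard₃⟩ := card_lowerCentralSeries_of_maximal_class hp hcard h5 h4
  have hD₃ : derivedSeries G 2 ≤ (⊤ : Subgroup G).lowerCentralSeries 3 :=
    commutator_lowerCentralSeries_le 1 1
  have hcentral : ⁅⁅derivedSeries G 1, derivedSeries G 1⁆, derivedSeries G 1⁆ = ⊥ :=
    le_bot_iff.mp <| h5 ▸ (commutator_mono hD₃ le_rfl).trans (commutator_lowerCentralSeries_le 3 1)
  obtain ⟨e, he, hcard₂⟩ := (Nat.dvd_prime_pow hp).mp (hcard₃ ▸ card_dvd_of_le hD₃)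
  have hne₂ : e ≠ 2 := by
    rintro rfl
    have hq : (derivedSeries G 2).relIndex (derivedSeries G 1) = p ^ 2 :=
      relIndex_eq_pow_of_card_eq_pow (derivedSeries_antitone G (Nat.le_succ 1)) hp.pos hcard₂ hcard₁
    have := Nat.le_of_dvd hp.pos (hcard₂ ▸ card_commutator_dvd_of_relIndex_eq_sq hcentral hp hq)
    nlinarith [hp.two_le]
  have hne₀ : e ≠ 0 := by
    rintro rfl
    exact h2 (card_eq_one.mp hcard₂)
  rw [hcard₂, show e = 1 by omega, pow_one]

end MaximalClass

theorem IsSmallDerivedQuotient.derivedSeries_two_ne_bot {p : ℕ} {H : Type*} [Group H] {d : ℕ}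
    (h : IsSmallDerivedQuotient p H d) (hd : d ≠ 0) : derivedSeries H 2 ≠ ⊥ := fun hbot =>
  h.1 (le_bot_iff.mp (hbot ▸ derivedSeries_antitone H (by omega : 2 ≤ d + 1)))

theorem two_small_derived_quotients_iff_not_metabelian_general {p : ℕ} (hp : p.Prime)
    {H : Type*} [Group H] [Finite H]
    (hcard : Nat.card H = p ^ 6)
    (hclass : (⊤ : Subgroup H).lowerCentralSeries 5 = ⊥ ∧ (⊤ : Subgroup H).lowerCentralSeries 4 ≠ ⊥) :
    (∃ d₁ d₂ : ℕ, d₁ ≠ d₂ ∧ IsSmallDerivedQuotient p H d₁ ∧ IsSmallDerivedQuotient p H d₂) ↔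
      derivedSeries H 2 ≠ ⊥ := by
  obtain ⟨h5, h4⟩ := hclass
  refine ⟨fun ⟨d₁, d₂, hne, hs₁, hs₂⟩ => ?_, fun h2 => ?_⟩
  · rcases eq_or_ne d₁ 0 with rfl | hd₁
    · exact hs₂.derivedSeries_two_ne_bot hne.symm
    · exact hs₁.derivedSeries_two_ne_bot hd₁
  have hD₁ : Nat.card (derivedSeries H 1) = p ^ 4 :=
    (card_lowerCentralSeries_of_maximal_class hp hcard h5 h4).1
  have hD₂ := card_derivedSeries_two_of_maximal_class hp hcard h5 h4 h2
  have hD₂₁ : derivedSeries H 2 ≤ derivedSeries H 1 := derivedSeries_antitone H (Nat.le_succ 1)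
  refine ⟨0, 1, zero_ne_one, ⟨ne_bot_of_le_ne_bot h2 hD₂₁, ?_⟩, ⟨h2, ?_⟩⟩
  · rw [derivedSeries_zero]
    exact relIndex_eq_pow_of_card_eq_pow le_top hp.pos hD₁ (by rw [card_top, hcard]; norm_num)
  · exact relIndex_eq_pow_of_card_eq_pow hD₂₁ hp.pos (hD₂.trans (pow_one p).symm) hD₁

/-- Let `p ≥ 5` be a prime and `H` a finite `p`-group of order `p^6` and maximal class
(nilpotency class `5`, i.e. `γ₆(H) = 1` and `γ₅(H) ≠ 1` with
`γ_i(H) = lowerCentralSeries H (i-1)`). Then `H` has two small derived quotients iff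
`H` is not metabelian, i.e. `H'' ≠ 1`. -/
theorem two_small_derived_quotients_iff_not_metabelian {p : ℕ} (hp : p.Prime) (hp5 : 5 ≤ p)
    {H : Type*} [Group H] [Finite H] (hH : IsPGroup p H)
    (hcard : Nat.card H = p ^ 6)
    (hclass : (⊤ : Subgroup H).lowerCentralSeries 5 = ⊥ ∧ (⊤ : Subgroup H).lowerCentralSeries 4 ≠ ⊥) :
    (∃ d₁ d₂ : ℕ, d₁ ≠ d₂ ∧ IsSmallDerivedQuotient p H d₁ ∧ IsSmallDerivedQuotient p H d₂) ↔
      derivedSeries H 2 ≠ ⊥ :=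
  two_small_derived_quotients_iff_not_metabelian_general hp hcard hclass
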